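/- arXiv:0710.2712 — 8 statements merged into one kernel-verified Lean document; each statement's English description precedes it below -/
import Mathlib

section
/- There is an explicit double covering homomorphism φ: SU(2) → SO(3): for x = [[p+√-1·q, r+√-1·s],[-r+√-1·s, p-√-1·q]] ∈ SU(2) with p,q,r,s real and p²+q²+r²+s² = 1, the 3×3 real matrix φ(x) with rows (p²+q²-r²-s², -2(ps-qr), 2(pr+qs)), (2(ps+qr), p²-q²+r²-s², -2(pq-rs)), (-2(pr-qs), 2(pq+rs), p²-q²-r²+s²) is a special orthogonal matrix, φ is a group homomorphism, and its kernel is {±1_2}. -/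
noncomputable section
open Complex Matrix

/-- The explicit covering map `φ : SU(2) → SO(3)`, written in terms of the entries of
`x = [[p+√-1 q, r+√-1 s],[-r+√-1 s, p-√-1 q]]`. -/
def phiM (x : Matrix (Fin 2) (Fin 2) ℂ) : Matrix (Fin 3) (Fin 3) ℝ :=
  let p := (x 0 0).re; let q := (x 0 0).im; let r := (x 0 1).re; let s := (x 0 1).im
  !![p^2 + q^2 - r^2 - s^2, -2*(p*s - q*r), 2*(p*r + q*s);
     2*(p*s + q*r), p^2 - q^2 + r^2 - s^2, -2*(p*q - r*s);
     -2*(p*r - q*s), 2*(p*q + r*s), p^2 - q^2 - r^2 + s^2]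

/-- `x` is an element of `SU(2)` realized inside the quaternions:
`x = [[a, b],[-b̄, ā]]` with `det x = 1`. -/
def isSU2 (x : Matrix (Fin 2) (Fin 2) ℂ) : Prop :=
  x 1 0 = -(starRingEnd ℂ) (x 0 1) ∧ x 1 1 = (starRingEnd ℂ) (x 0 0) ∧ x.det = 1

lemma su2_norm {x : Matrix (Fin 2) (Fin 2) ℂ} (h : isSU2 x) :
    (x 0 0).re^2 + (x 0 0).im^2 + (x 0 1).re^2 + (x 0 1).im^2 = 1 := by
  obtain ⟨h1, h2, h3⟩ := h
  rw [Matrix.det_fin_two, h1, h2] at h3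
  have := congrArg Complex.re h3
  simp [Complex.mul_re, Complex.mul_im] at this
  nlinarith [this]

/-- The map `φ : SU(2) → SO(3)` lands in special orthogonal matrices, is a group
homomorphism, and has kernel `{±1}`. -/
theorem stmt_3 :
    (∀ x, isSU2 x → (phiM x)ᵀ * phiM x = 1 ∧ (phiM x).det = 1) ∧
    (∀ x y, isSU2 x → isSU2 y → phiM (x * y) = phiM x * phiM y) ∧
    (∀ x, isSU2 x → (phiM x = 1 ↔ x = 1 ∨ x = -1)) := by
  refine ⟨fun x h => ?_, fun x y hx hy => ?_, fun x h => ?_⟩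
  · have hn := su2_norm h
    set p := (x 0 0).re; set q := (x 0 0).im; set r := (x 0 1).re; set s := (x 0 1).im
    constructor
    · ext i j
      fin_cases i <;> fin_cases j <;>
        simp [phiM, Matrix.mul_apply, Fin.sum_univ_succ, Matrix.one_apply] <;>
        first
          | ring1
          | linear_combination (p^2+q^2+r^2+s^2+1) * hn
    · have hd : (phiM x).det = (p^2+q^2+r^2+s^2)^3 := by
        simp [phiM, Matrix.det_fin_three]; ring
      rw [hd, hn]; norm_num
  · obtain ⟨hy1, hy2, -⟩ := hy
    ext i j
    fin_cases i <;> fin_cases j <;>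
      simp [phiM, Matrix.mul_apply, Fin.sum_univ_succ, hy1, hy2,
        Complex.add_re, Complex.add_im, Complex.mul_re, Complex.mul_im] <;>
      ring
  · have hn := su2_norm h
    obtain ⟨h1, h2, -⟩ := h
    constructor
    · intro he
      have e00 := congrFun (congrFun he 0) 0
      have e11 := congrFun (congrFun he 1) 1
      simp [phiM, Matrix.one_apply] at e00 e11
      have hr : (x 0 1).re = 0 := by nlinarith
      have hs : (x 0 1).im = 0 := by nlinarith
      have hq : (x 0 0).im = 0 := by nlinarith
      have hp : (x 0 0).re = 1 ∨ (x 0 0).re = -1 := by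
        have h' : ((x 0 0).re - 1) * ((x 0 0).re + 1) = 0 := by nlinarith
        rcases mul_eq_zero.1 h' with h' | h'
        · left; linarith
        · right; linarith
      rcases hp with hp | hp
      · left
        ext i j
        fin_cases i <;> fin_cases j <;>
          simp [Matrix.one_apply, h1, h2, Complex.ext_iff, hp, hq, hr, hs]
      · right
        ext i j
        fin_cases i <;> fin_cases j <;>
          simp [Matrix.one_apply, h1, h2, Complex.ext_iff, hp, hq, hr, hs]
    · rintro (rfl | rfl) <;>
      · ext i j
        fin_cases i <;> fin_cases j <;>
          simp [phiM, Matrix.one_apply, Matrix.vecHead, Matrix.vecTail]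
end
end

section
/- Define coefficients A_{[l,2;k,i]} = a(l,2;k,i)/d(l,2) with a(l,2;k,0) = (l+2-k)(l+1-k)(l-k), a(l,2;k,1) = -(l+2-k)(l+1-k)(l-4k), a(l,2;k,2) = -3(l+2-k)(l-2k+2)k, a(l,2;k,3) = -(3l-4k+8)k(k-1), a(l,2;k,4) = -k(k-1)(k-2), d(l,2) = (l+2)(l+1)l. Then for l ≥ 1 the linear map I^l_2: V_{l+2} → V_l ⊗ V_4 given by I^l_2(v_k^{(l+2)}) = Σ_{i=0}^4 A_{[l,2;k,i]}·v_{k+1-i}^{(l)} ⊗ w_i (with out-of-range basis vectors set to 0) is a nonzero sl(2,C)-equivariant map. -/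
/-!
Each of `Iop l (X · v_k)` and `X · Iop l v_k` is supported on a single antidiagonal
`q + i = const`, so every equivariance identity collapses to a three-term recurrence for the
numerators `a(k, i)` of the coefficients, read off along that antidiagonal:
`k a(k-1, i) = (k-i+1) a(k, i) + (i+1) a(k, i+1)` for `E` and
`(k-l-2) a(k+1, i) = (k+1-i-l) a(k, i) + (i-5) a(k, i-1)` for `F`.
Since `a` vanishes for `i ∉ [0, 4]`, these are polynomial identities in `k` and `l` for every
`i ∈ ℤ`. The map is nonzero because `A_{[l,2;0,0]} = d(l,2)/d(l,2) = 1`.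
-/

noncomputable section

namespace Stmt7


/-- The delta basis vector `v_k` of the sl(2,ℂ)-module `V_n`, realized inside `ℤ → ℂ`. -/
def dv (k : ℤ) : ℤ → ℂ := fun j => if j = k then 1 else 0

/-- `H` on `V_n`: `H·v_k = (n-2k)v_k`. -/
def Hv (n : ℤ) (f : ℤ → ℂ) : ℤ → ℂ := fun j => ((n - 2 * j : ℤ) : ℂ) * f j
/-- `E` on `V_n`: `E·v_k = -k·v_{k-1}`. -/
def Ev (f : ℤ → ℂ) : ℤ → ℂ := fun j => ((-(j + 1) : ℤ) : ℂ) * f (j + 1)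
/-- `F` on `V_n`: `F·v_k = (k-n)·v_{k+1}`. -/
def Fv (n : ℤ) (f : ℤ → ℂ) : ℤ → ℂ := fun j => ((j - 1 - n : ℤ) : ℂ) * f (j - 1)

/-- The diagonal action of `H` on `V_l ⊗ V_4`, components indexed by `(q, i)`. -/
def Ht (l : ℤ) (f : ℤ × ℤ → ℂ) : ℤ × ℤ → ℂ :=
  fun p => ((l + 4 - 2 * p.1 - 2 * p.2 : ℤ) : ℂ) * f p
/-- The diagonal action of `E` on `V_l ⊗ V_4`. -/
def Et (f : ℤ × ℤ → ℂ) : ℤ × ℤ → ℂ :=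
  fun p => ((-(p.1 + 1) : ℤ) : ℂ) * f (p.1 + 1, p.2) + ((-(p.2 + 1) : ℤ) : ℂ) * f (p.1, p.2 + 1)
/-- The diagonal action of `F` on `V_l ⊗ V_4`. -/
def Ft (l : ℤ) (f : ℤ × ℤ → ℂ) : ℤ × ℤ → ℂ :=
  fun p => ((p.1 - 1 - l : ℤ) : ℂ) * f (p.1 - 1, p.2) + ((p.2 - 5 : ℤ) : ℂ) * f (p.1, p.2 - 1)

/-- The Clebsch–Gordan coefficients `A_{[l,2;k,i]} = a(l,2;k,i)/d(l,2)`. -/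
def Acoef (l k i : ℤ) : ℂ :=
  (if i = 0 then ((l+2-k)*(l+1-k)*(l-k) : ℤ)
   else if i = 1 then (-((l+2-k)*(l+1-k)*(l-4*k)) : ℤ)
   else if i = 2 then (-(3*(l+2-k)*(l-2*k+2)*k) : ℤ)
   else if i = 3 then (-((3*l-4*k+8)*k*(k-1)) : ℤ)
   else if i = 4 then (-(k*(k-1)*(k-2)) : ℤ) else 0 : ℤ)
    / (((l+2)*(l+1)*l : ℤ) : ℂ)

/-- The map `I^l_2 : V_{l+2} → V_l ⊗ V_4`, whose `(q,i)`-component of `I f` receives the contribution from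
`k = p.1 + p.2 - 1`. -/
def Iop (l : ℤ) (f : ℤ → ℂ) : ℤ × ℤ → ℂ :=
  fun p => if 0 ≤ p.2 ∧ p.2 ≤ 4 then Acoef l (p.1 + p.2 - 1) p.2 * f (p.1 + p.2 - 1) else 0

def acoefNum (l k i : ℤ) : ℤ :=
  if i = 0 then (l+2-k)*(l+1-k)*(l-k)
  else if i = 1 then -((l+2-k)*(l+1-k)*(l-4*k))
  else if i = 2 then -(3*(l+2-k)*(l-2*k+2)*k)
  else if i = 3 then -((3*l-4*k+8)*k*(k-1))
  else if i = 4 then -(k*(k-1)*(k-2)) else 0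

theorem acoefNum_of_lt_zero {i : ℤ} (hi : i < 0) (l k : ℤ) : acoefNum l k i = 0 := by
  simp only [acoefNum]; split_ifs <;> first | rfl | omega

theorem acoefNum_of_four_lt {i : ℤ} (hi : 4 < i) (l k : ℤ) : acoefNum l k i = 0 := by
  simp only [acoefNum]; split_ifs <;> first | rfl | omega

theorem acoefNum_raise (l k i : ℤ) :
    k * acoefNum l (k - 1) i = (k - i + 1) * acoefNum l k i + (i + 1) * acoefNum l k (i + 1) := by
  rcases lt_or_ge i (-1) with hi | hi
  · simp [acoefNum_of_lt_zero (show i < 0 by omega), acoefNum_of_lt_zero (show i + 1 < 0 by omega)]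
  rcases lt_or_ge 4 i with hi' | hi'
  · simp [acoefNum_of_four_lt hi', acoefNum_of_four_lt (show 4 < i + 1 by omega)]
  obtain rfl | rfl | rfl | rfl | rfl | rfl : i = -1 ∨ i = 0 ∨ i = 1 ∨ i = 2 ∨ i = 3 ∨ i = 4 := by
    omega
  all_goals norm_num [acoefNum] <;> ring

theorem acoefNum_lower (l k i : ℤ) :
    (k - l - 2) * acoefNum l (k + 1) i
      = (k + 1 - i - l) * acoefNum l k i + (i - 5) * acoefNum l k (i - 1) := by
  rcases lt_or_ge i 0 with hi | hi
  · simp [acoefNum_of_lt_zero hi, acoefNum_of_lt_zero (show i - 1 < 0 by omega)]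
  rcases lt_or_ge 5 i with hi' | hi'
  · simp [acoefNum_of_four_lt (show 4 < i by omega), acoefNum_of_four_lt (show 4 < i - 1 by omega)]
  obtain rfl | rfl | rfl | rfl | rfl | rfl : i = 0 ∨ i = 1 ∨ i = 2 ∨ i = 3 ∨ i = 4 ∨ i = 5 := by
    omega
  all_goals norm_num [acoefNum] <;> ring

theorem Acoef_eq (l k i : ℤ) : Acoef l k i = acoefNum l k i / (((l+2)*(l+1)*l : ℤ) : ℂ) := rfl

theorem Acoef_of_not_mem {i : ℤ} (hi : ¬(0 ≤ i ∧ i ≤ 4)) (l k : ℤ) : Acoef l k i = 0 := by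
  rcases not_and_or.mp hi with hi | hi
  · simp [Acoef_eq, acoefNum_of_lt_zero (not_le.mp hi)]
  · simp [Acoef_eq, acoefNum_of_four_lt (not_le.mp hi)]

theorem Acoef_raise (l k i : ℤ) :
    (k : ℂ) * Acoef l (k - 1) i = (k - i + 1) * Acoef l k i + (i + 1) * Acoef l k (i + 1) := by
  have h := congrArg (Int.cast : ℤ → ℂ) (acoefNum_raise l k i)
  push_cast at h
  simp only [Acoef_eq]
  linear_combination h / (((l + 2) * (l + 1) * l : ℤ) : ℂ)

theorem Acoef_lower (l k i : ℤ) :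
    ((k : ℂ) - l - 2) * Acoef l (k + 1) i
      = (k + 1 - i - l) * Acoef l k i + (i - 5) * Acoef l k (i - 1) := by
  have h := congrArg (Int.cast : ℤ → ℂ) (acoefNum_lower l k i)
  push_cast at h
  simp only [Acoef_eq]
  linear_combination h / (((l + 2) * (l + 1) * l : ℤ) : ℂ)

theorem Acoef_zero_zero {l : ℤ} (hl : 0 < l) : Acoef l 0 0 = 1 := by
  have hd : (((l + 2) * (l + 1) * l : ℤ) : ℂ) ≠ 0 := by exact_mod_cast (by positivity)
  rw [Acoef_eq, div_eq_one_iff_eq hd]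
  simp [acoefNum]

theorem Iop_smul (l : ℤ) (c : ℂ) (f : ℤ → ℂ) : Iop l (c • f) = c • Iop l f := by
  funext p
  simp only [Iop, Pi.smul_apply, smul_eq_mul]
  split_ifs <;> ring

theorem Iop_dv (l k q i : ℤ) : Iop l (dv k) (q, i) = if q + i = k + 1 then Acoef l k i else 0 := by
  by_cases hi : 0 ≤ i ∧ i ≤ 4
  · by_cases h : q + i = k + 1
    · simp [Iop, dv, hi, h]
    · simp [Iop, dv, hi, h, show q + i - 1 ≠ k by omega]
  · simp [Iop, hi, Acoef_of_not_mem hi]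

theorem Hv_dv (n k : ℤ) : Hv n (dv k) = ((n - 2 * k : ℤ) : ℂ) • dv k := by
  funext j
  by_cases h : j = k <;> simp [Hv, dv, h]

theorem Ev_dv (k : ℤ) : Ev (dv k) = ((-k : ℤ) : ℂ) • dv (k - 1) := by
  funext j
  by_cases h : j = k - 1
  · simp [Ev, dv, h]
  · simp [Ev, dv, h, show j + 1 ≠ k by omega]

theorem Fv_dv (n k : ℤ) : Fv n (dv k) = ((k - n : ℤ) : ℂ) • dv (k + 1) := by
  funext j
  by_cases h : j = k + 1
  · simp [Fv, dv, h]
  · simp [Fv, dv, h, show j - 1 ≠ k by omega]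

theorem Iop_Hv_dv (l k : ℤ) : Iop l (Hv (l + 2) (dv k)) = Ht l (Iop l (dv k)) := by
  funext ⟨q, i⟩
  rw [Hv_dv, Iop_smul]
  simp only [Pi.smul_apply, smul_eq_mul, Ht, Iop_dv]
  split_ifs with h
  · rw [show l + 4 - 2 * q - 2 * i = l + 2 - 2 * k by omega]
  · simp

theorem Iop_Ev_dv (l k : ℤ) : Iop l (Ev (dv k)) = Et (Iop l (dv k)) := by
  funext ⟨q, i⟩
  rw [Ev_dv, Iop_smul]
  simp only [Pi.smul_apply, smul_eq_mul, Et, Iop_dv]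
  by_cases h : q + i = k
  · rw [if_pos (by omega), if_pos (by omega), if_pos (by omega)]
    obtain rfl : q = k - i := by omega
    push_cast
    linear_combination (-1 : ℂ) * Acoef_raise l k i
  · rw [if_neg (by omega), if_neg (by omega), if_neg (by omega)]
    simp

theorem Iop_Fv_dv (l k : ℤ) : Iop l (Fv (l + 2) (dv k)) = Ft l (Iop l (dv k)) := by
  funext ⟨q, i⟩
  rw [Fv_dv, Iop_smul]
  simp only [Pi.smul_apply, smul_eq_mul, Ft, Iop_dv]
  by_cases h : q + i = k + 2
  · rw [if_pos (by omega), if_pos (by omega), if_pos (by omega)]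
    obtain rfl : q = k + 2 - i := by omega
    push_cast
    linear_combination Acoef_lower l k i
  · rw [if_neg (by omega), if_neg (by omega), if_neg (by omega)]
    simp

/-- `I^l_2 : V_{l+2} → V_l ⊗ V_4` is a nonzero sl(2,ℂ)-equivariant map. -/
theorem stmt_7 (l : ℤ) (hl : 1 ≤ l) :
    (∀ k : ℤ, 0 ≤ k → k ≤ l + 2 →
      Iop l (Hv (l + 2) (dv k)) = Ht l (Iop l (dv k)) ∧
      Iop l (Ev (dv k)) = Et (Iop l (dv k)) ∧
      Iop l (Fv (l + 2) (dv k)) = Ft l (Iop l (dv k))) ∧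
    (∃ k : ℤ, 0 ≤ k ∧ k ≤ l + 2 ∧ Iop l (dv k) ≠ 0) := by
  refine ⟨fun k _ _ => ⟨Iop_Hv_dv l k, Iop_Ev_dv l k, Iop_Fv_dv l k⟩, 0, le_rfl, by omega, ?_⟩
  intro h
  have h10 := congrFun h (1, 0)
  rw [Iop_dv, if_pos (by norm_num), Acoef_zero_zero hl] at h10
  exact one_ne_zero h10

end Stmt7
end
end

section
/- Define coefficients A_{[l,0;k,i]} = a(l,0;k,i)/d(l,0) with a(l,0;k,0) = (l-k)(l-1-k), a(l,0;k,1) = -2(l-k)(l-2k-1), a(l,0;k,2) = l²-6kl+6k²-l, a(l,0;k,3) = 2(l-2k+1)k, a(l,0;k,4) = k(k-1), d(l,0) = l(l-1). Then for l ≥ 2 the linear map I^l_0: V_l → V_l ⊗ V_4 given by I^l_0(v_k^{(l)}) = Σ_{i=0}^4 A_{[l,0;k,i]}·v_{k+2-i}^{(l)} ⊗ w_i (with out-of-range basis vectors set to 0) is a nonzero sl(2,C)-equivariant map. -/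
noncomputable section

namespace Stmt8


/-- The delta basis vector `v_k` of the sl(2,ℂ)-module `V_n`, realized inside `ℤ → ℂ`. -/
def dv (k : ℤ) : ℤ → ℂ := fun j => if j = k then 1 else 0

/-- `H` on `V_n`: `H·v_k = (n-2k)v_k`. -/
def Hv (n : ℤ) (f : ℤ → ℂ) : ℤ → ℂ := fun j => ((n - 2 * j : ℤ) : ℂ) * f j
/-- `E` on `V_n`: `E·v_k = -k·v_{k-1}`. -/
def Ev (f : ℤ → ℂ) : ℤ → ℂ := fun j => ((-(j + 1) : ℤ) : ℂ) * f (j + 1)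
/-- `F` on `V_n`: `F·v_k = (k-n)·v_{k+1}`. -/
def Fv (n : ℤ) (f : ℤ → ℂ) : ℤ → ℂ := fun j => ((j - 1 - n : ℤ) : ℂ) * f (j - 1)

/-- The diagonal action of `H` on `V_l ⊗ V_4`, components indexed by `(q, i)`. -/
def Ht (l : ℤ) (f : ℤ × ℤ → ℂ) : ℤ × ℤ → ℂ :=
  fun p => ((l + 4 - 2 * p.1 - 2 * p.2 : ℤ) : ℂ) * f p
/-- The diagonal action of `E` on `V_l ⊗ V_4`. -/
def Et (f : ℤ × ℤ → ℂ) : ℤ × ℤ → ℂ :=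
  fun p => ((-(p.1 + 1) : ℤ) : ℂ) * f (p.1 + 1, p.2) + ((-(p.2 + 1) : ℤ) : ℂ) * f (p.1, p.2 + 1)
/-- The diagonal action of `F` on `V_l ⊗ V_4`. -/
def Ft (l : ℤ) (f : ℤ × ℤ → ℂ) : ℤ × ℤ → ℂ :=
  fun p => ((p.1 - 1 - l : ℤ) : ℂ) * f (p.1 - 1, p.2) + ((p.2 - 5 : ℤ) : ℂ) * f (p.1, p.2 - 1)

/-- The Clebsch–Gordan coefficients `A_{[l,0;k,i]} = a(l,0;k,i)/d(l,0)`. -/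
def Acoef (l k i : ℤ) : ℂ :=
  (if i = 0 then ((l-k)*(l-1-k) : ℤ)
   else if i = 1 then (-(2*(l-k)*(l-2*k-1)) : ℤ)
   else if i = 2 then (l^2-6*k*l+6*k^2-l : ℤ)
   else if i = 3 then (2*(l-2*k+1)*k : ℤ)
   else if i = 4 then (k*(k-1) : ℤ) else 0 : ℤ)
    / ((l*(l-1) : ℤ) : ℂ)

/-- The map `I^l_0 : V_l → V_l ⊗ V_4`, whose `(q,i)`-component of `I f` receives the contribution from
`k = p.1 + p.2 - 2`. -/
def Iop (l : ℤ) (f : ℤ → ℂ) : ℤ × ℤ → ℂ :=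
  fun p => if 0 ≤ p.2 ∧ p.2 ≤ 4 then Acoef l (p.1 + p.2 - 2) p.2 * f (p.1 + p.2 - 2) else 0

/-
`I (v_k) = ∑ᵢ A(k,i) v_{k+2-i} ⊗ wᵢ`, and `A(k,i) = 0` for `i ∉ [0,4]`, so the cut-off in
`Iop` can be dropped and each generator acts on a single line of components `q = k + const - i`.
Comparing coefficients, `H` commutes because the weights agree, while `E` and `F` commute exactly when
the numerators `a(k,i)` satisfy a lowering and a raising three-term recurrence, both polynomial
identities in `k` and `l`. For `l ≥ 2` the denominator `d = l(l-1)` is nonzero and `A(0,0) = 1`.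
-/

theorem Acoef_eq_zero {l k i : ℤ} (hi : ¬(0 ≤ i ∧ i ≤ 4)) : Acoef l k i = 0 := by
  have : i ≠ 0 ∧ i ≠ 1 ∧ i ≠ 2 ∧ i ≠ 3 ∧ i ≠ 4 := by omega
  simp [Acoef, this]

theorem Acoef_zero_zero {l : ℤ} (hl : l * (l - 1) ≠ 0) : Acoef l 0 0 = 1 := by
  simp only [Acoef, if_true, sub_zero]
  exact div_self (Int.cast_ne_zero.mpr hl)

theorem Acoef_lowering (l k i : ℤ) :
    ((k + 2 - i : ℤ) : ℂ) * Acoef l k i + ((i + 1 : ℤ) : ℂ) * Acoef l k (i + 1)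
      = (k : ℂ) * Acoef l (k - 1) i := by
  by_cases hi : -1 ≤ i ∧ i ≤ 4
  · obtain ⟨hi₁, hi₂⟩ := hi
    interval_cases i <;> simp [Acoef] <;> ring
  · simp [Acoef_eq_zero (show ¬(0 ≤ i ∧ i ≤ 4) by omega),
      Acoef_eq_zero (show ¬(0 ≤ i + 1 ∧ i + 1 ≤ 4) by omega)]

theorem Acoef_raising (l k i : ℤ) :
    ((k + 2 - i - l : ℤ) : ℂ) * Acoef l k i + ((i - 5 : ℤ) : ℂ) * Acoef l k (i - 1)
      = ((k - l : ℤ) : ℂ) * Acoef l (k + 1) i := by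
  by_cases hi : 0 ≤ i ∧ i ≤ 5
  · obtain ⟨hi₁, hi₂⟩ := hi
    interval_cases i <;> simp [Acoef] <;> ring
  · simp [Acoef_eq_zero (show ¬(0 ≤ i ∧ i ≤ 4) by omega),
      Acoef_eq_zero (show ¬(0 ≤ i - 1 ∧ i - 1 ≤ 4) by omega)]

theorem Iop_apply (l : ℤ) (f : ℤ → ℂ) (p : ℤ × ℤ) :
    Iop l f p = Acoef l (p.1 + p.2 - 2) p.2 * f (p.1 + p.2 - 2) := by
  unfold Iop
  split_ifs with hi
  · rfl
  · rw [Acoef_eq_zero hi, zero_mul]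

theorem Iop_dv_apply (l k q i : ℤ) :
    Iop l (dv k) (q, i) = if q + i - 2 = k then Acoef l k i else 0 := by
  rw [Iop_apply, dv]
  split_ifs with h
  · rw [h, mul_one]
  · rw [mul_zero]

theorem Iop_smul (l : ℤ) (c : ℂ) (f : ℤ → ℂ) : Iop l (c • f) = c • Iop l f := by
  funext p
  simp only [Iop_apply, Pi.smul_apply, smul_eq_mul]
  ring

theorem Hv_dv (n k : ℤ) : Hv n (dv k) = ((n - 2 * k : ℤ) : ℂ) • dv k := by
  funext j
  by_cases h : j = k <;> simp [Hv, dv, h]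

theorem Ev_dv (k : ℤ) : Ev (dv k) = ((-k : ℤ) : ℂ) • dv (k - 1) := by
  funext j
  by_cases h : j = k - 1
  · simp [Ev, dv, h]
  · simp [Ev, dv, h, show j + 1 ≠ k by omega]

theorem Fv_dv (n k : ℤ) : Fv n (dv k) = ((k - n : ℤ) : ℂ) • dv (k + 1) := by
  funext j
  by_cases h : j = k + 1
  · simp [Fv, dv, h]
  · simp [Fv, dv, h, show j - 1 ≠ k by omega]

theorem Iop_Hv_dv (l k : ℤ) : Iop l (Hv l (dv k)) = Ht l (Iop l (dv k)) := by
  funext ⟨q, i⟩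
  rw [Hv_dv, Iop_smul, Pi.smul_apply, smul_eq_mul, Ht, Iop_dv_apply]
  split_ifs with h
  · obtain rfl : q = k + 2 - i := by omega
    push_cast
    ring
  · simp

theorem Iop_Ev_dv (l k : ℤ) : Iop l (Ev (dv k)) = Et (Iop l (dv k)) := by
  funext ⟨q, i⟩
  rw [Ev_dv, Iop_smul, Pi.smul_apply, smul_eq_mul, Et, Iop_dv_apply, Iop_dv_apply, Iop_dv_apply]
  by_cases h : q = k + 1 - i
  · subst h
    simp only [show k + 1 - i + i - 2 = k - 1 by ring, show k + 1 - i + 1 + i - 2 = k by ring,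
      show k + 1 - i + (i + 1) - 2 = k by ring, if_true]
    have h := Acoef_lowering l k i
    push_cast at h ⊢
    linear_combination h
  · simp [show q + i - 2 ≠ k - 1 by omega, show q + 1 + i - 2 ≠ k by omega,
      show q + (i + 1) - 2 ≠ k by omega]

theorem Iop_Fv_dv (l k : ℤ) : Iop l (Fv l (dv k)) = Ft l (Iop l (dv k)) := by
  funext ⟨q, i⟩
  rw [Fv_dv, Iop_smul, Pi.smul_apply, smul_eq_mul, Ft, Iop_dv_apply, Iop_dv_apply, Iop_dv_apply]
  by_cases h : q = k + 3 - i
  · subst h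
    simp only [show k + 3 - i + i - 2 = k + 1 by ring, show k + 3 - i - 1 + i - 2 = k by ring,
      show k + 3 - i + (i - 1) - 2 = k by ring, if_true]
    have h := Acoef_raising l k i
    push_cast at h ⊢
    linear_combination -h
  · simp [show q + i - 2 ≠ k + 1 by omega, show q - 1 + i - 2 ≠ k by omega,
      show q + (i - 1) - 2 ≠ k by omega]

/-- `I^l_0 : V_l → V_l ⊗ V_4` is a nonzero sl(2,ℂ)-equivariant map. -/
theorem stmt_8 (l : ℤ) (hl : 2 ≤ l) :
    (∀ k : ℤ, 0 ≤ k → k ≤ l →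
      Iop l (Hv (l) (dv k)) = Ht l (Iop l (dv k)) ∧
      Iop l (Ev (dv k)) = Et (Iop l (dv k)) ∧
      Iop l (Fv (l) (dv k)) = Ft l (Iop l (dv k))) ∧
    (∃ k : ℤ, 0 ≤ k ∧ k ≤ l ∧ Iop l (dv k) ≠ 0) := by
  refine ⟨fun k _ _ => ⟨Iop_Hv_dv l k, Iop_Ev_dv l k, Iop_Fv_dv l k⟩, 0, le_rfl, by omega, ?_⟩
  have hd : l * (l - 1) ≠ 0 := (mul_pos (by omega) (by omega)).ne'
  intro h
  have h20 := congrFun h (2, 0)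
  rw [Iop_dv_apply, if_pos (by norm_num), Acoef_zero_zero hd] at h20
  exact one_ne_zero h20

end Stmt8
end
end

section
/- Define coefficients A_{[l,-2;k,i]} = a(l,-2;k,i)/(l-2) with a(l,-2;k,0) = l-k-2, a(l,-2;k,1) = -(3l-4k-6), a(l,-2;k,2) = 3(l-2k-2), a(l,-2;k,3) = -(l-4k-2), a(l,-2;k,4) = -k. Then for l ≥ 3 the linear map I^l_{-2}: V_{l-2} → V_l ⊗ V_4 given by I^l_{-2}(v_k^{(l-2)}) = Σ_{i=0}^4 A_{[l,-2;k,i]}·v_{k+3-i}^{(l)} ⊗ w_i (with out-of-range basis vectors set to 0) is a nonzero sl(2,C)-equivariant map. -/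
noncomputable section

namespace Stmt9


/-- The delta basis vector `v_k` of the sl(2,ℂ)-module `V_n`, realized inside `ℤ → ℂ`. -/
def dv (k : ℤ) : ℤ → ℂ := fun j => if j = k then 1 else 0

/-- `H` on `V_n`: `H·v_k = (n-2k)v_k`. -/
def Hv (n : ℤ) (f : ℤ → ℂ) : ℤ → ℂ := fun j => ((n - 2 * j : ℤ) : ℂ) * f j
/-- `E` on `V_n`: `E·v_k = -k·v_{k-1}`. -/
def Ev (f : ℤ → ℂ) : ℤ → ℂ := fun j => ((-(j + 1) : ℤ) : ℂ) * f (j + 1)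
/-- `F` on `V_n`: `F·v_k = (k-n)·v_{k+1}`. -/
def Fv (n : ℤ) (f : ℤ → ℂ) : ℤ → ℂ := fun j => ((j - 1 - n : ℤ) : ℂ) * f (j - 1)

/-- The diagonal action of `H` on `V_l ⊗ V_4`, components indexed by `(q, i)`. -/
def Ht (l : ℤ) (f : ℤ × ℤ → ℂ) : ℤ × ℤ → ℂ :=
  fun p => ((l + 4 - 2 * p.1 - 2 * p.2 : ℤ) : ℂ) * f p
/-- The diagonal action of `E` on `V_l ⊗ V_4`. -/
def Et (f : ℤ × ℤ → ℂ) : ℤ × ℤ → ℂ :=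
  fun p => ((-(p.1 + 1) : ℤ) : ℂ) * f (p.1 + 1, p.2) + ((-(p.2 + 1) : ℤ) : ℂ) * f (p.1, p.2 + 1)
/-- The diagonal action of `F` on `V_l ⊗ V_4`. -/
def Ft (l : ℤ) (f : ℤ × ℤ → ℂ) : ℤ × ℤ → ℂ :=
  fun p => ((p.1 - 1 - l : ℤ) : ℂ) * f (p.1 - 1, p.2) + ((p.2 - 5 : ℤ) : ℂ) * f (p.1, p.2 - 1)

/-- The Clebsch–Gordan coefficients `A_{[l,-2;k,i]} = a(l,-2;k,i)/(l-2)`. -/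
def Acoef (l k i : ℤ) : ℂ :=
  (if i = 0 then (l-k-2 : ℤ)
   else if i = 1 then (-(3*l-4*k-6) : ℤ)
   else if i = 2 then (3*(l-2*k-2) : ℤ)
   else if i = 3 then (-(l-4*k-2) : ℤ)
   else if i = 4 then (-k : ℤ) else 0 : ℤ)
    / ((l-2 : ℤ) : ℂ)

/-- The map `I^l_{-2} : V_{l-2} → V_l ⊗ V_4`, whose `(q,i)`-component of `I f` receives the contribution from
`k = p.1 + p.2 - 3`. -/
def Iop (l : ℤ) (f : ℤ → ℂ) : ℤ × ℤ → ℂ :=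
  fun p => if 0 ≤ p.2 ∧ p.2 ≤ 4 then Acoef l (p.1 + p.2 - 3) p.2 * f (p.1 + p.2 - 3) else 0


private lemma hlne (l : ℤ) (hl : 3 ≤ l) : ((l - 2 : ℤ) : ℂ) ≠ 0 := by
  have h : (l - 2 : ℤ) ≠ 0 := by omega
  exact_mod_cast Int.cast_ne_zero.mpr h

private lemma keyH (l : ℤ) (hl : 3 ≤ l) (k : ℤ) :
    Iop l (Hv (l - 2) (dv k)) = Ht l (Iop l (dv k)) := by
  funext p
  obtain ⟨q, i⟩ := p
  simp only [Iop, Hv, Ht]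
  split_ifs with h
  · push_cast; ring
  · simp

set_option maxHeartbeats 1000000 in
private lemma keyE (l : ℤ) (hl : 3 ≤ l) (k : ℤ) :
    Iop l (Ev (dv k)) = Et (Iop l (dv k)) := by
  have hl2 := hlne l hl
  funext p
  obtain ⟨q, i⟩ := p
  simp only [Iop, Ev, Et]
  rw [show q + i - 3 + 1 = q + i - 2 from by ring,
      show q + 1 + i - 3 = q + i - 2 from by ring,
      show q + (i + 1) - 3 = q + i - 2 from by ring]
  by_cases hk : q + i - 2 = k
  · subst hk
    simp only [dv, if_pos rfl, mul_one]
    have hi : i = -1 ∨ i = 0 ∨ i = 1 ∨ i = 2 ∨ i = 3 ∨ i = 4 ∨ (i < -1 ∨ 4 < i) := by omega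
    rcases hi with h|h|h|h|h|h|h
    all_goals try subst h
    all_goals simp only [Acoef]
    all_goals norm_num
    all_goals try (field_simp; ring)
    all_goals split_ifs <;> first | omega | simp
  · simp [dv, hk]

set_option maxHeartbeats 1000000 in
private lemma keyF (l : ℤ) (hl : 3 ≤ l) (k : ℤ) :
    Iop l (Fv (l - 2) (dv k)) = Ft l (Iop l (dv k)) := by
  have hl2 := hlne l hl
  funext p
  obtain ⟨q, i⟩ := p
  simp only [Iop, Fv, Ft]
  rw [show q + i - 3 - 1 = q + i - 4 from by ring,
      show q - 1 + i - 3 = q + i - 4 from by ring,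
      show q + (i - 1) - 3 = q + i - 4 from by ring]
  by_cases hk : q + i - 4 = k
  · subst hk
    simp only [dv, if_pos rfl, mul_one]
    have hi : i = 0 ∨ i = 1 ∨ i = 2 ∨ i = 3 ∨ i = 4 ∨ i = 5 ∨ (i < 0 ∨ 5 < i) := by omega
    rcases hi with h|h|h|h|h|h|h
    all_goals try subst h
    all_goals simp only [Acoef]
    all_goals norm_num
    all_goals try (field_simp; ring)
    all_goals split_ifs <;> first | omega | simp
  · simp [dv, hk]

/-- `I^l_{-2} : V_{l-2} → V_l ⊗ V_4` is a nonzero sl(2,ℂ)-equivariant map. -/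
theorem stmt_9 (l : ℤ) (hl : 3 ≤ l) :
    (∀ k : ℤ, 0 ≤ k → k ≤ l - 2 →
      Iop l (Hv (l - 2) (dv k)) = Ht l (Iop l (dv k)) ∧
      Iop l (Ev (dv k)) = Et (Iop l (dv k)) ∧
      Iop l (Fv (l - 2) (dv k)) = Ft l (Iop l (dv k))) ∧
    (∃ k : ℤ, 0 ≤ k ∧ k ≤ l - 2 ∧ Iop l (dv k) ≠ 0) := by
  refine ⟨fun k _ _ => ⟨keyH l hl k, keyE l hl k, keyF l hl k⟩, 0, le_refl 0, by omega, fun h => ?_⟩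
  have h30 := congrFun h (3, 0)
  have hl2 := hlne l hl
  simp only [Iop, Acoef, dv] at h30
  norm_num at h30
  have h2 : (l : ℂ) = 2 := by linear_combination h30
  have : l = 2 := by exact_mod_cast h2
  omega

end Stmt9
end
end

section
/- The Clebsch-Gordan coefficients A_{[l,2m;k,i]} of the embeddings I^l_{2m}: V_{l+2m} → V_l ⊗ V_4 satisfy, for all -2 ≤ m ≤ 2 and 0 ≤ k ≤ l+2m: (a) A_{[l,2m;l+2m-k,0]} = (-1)^m·A_{[l,2m;k,4]}; (b) A_{[l,2m;l+2m-k,2]} = (-1)^m·A_{[l,2m;k,2]}; (c) 3{(k-m+1)·A_{[l,2m;k,1]} + (l-k+m+1)·A_{[l,2m;k,3]}} = (ml+m²+m-6)·A_{[l,2m;k,2]}. -/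
noncomputable section

namespace Stmt11

/-- Numerators `a(l,2m;k,i)` of the Clebsch–Gordan coefficients of `I^l_{2m}`
(Formulas 1–5 of Proposition 3.2). -/
def a (l m k i : ℤ) : ℤ :=
  if m = 2 then
    (if i = 0 then (l+4-k)*(l+3-k)*(l+2-k)*(l+1-k)
     else if i = 1 then 4*(l+4-k)*(l+3-k)*(l+2-k)*k
     else if i = 2 then 6*(l+4-k)*(l+3-k)*k*(k-1)
     else if i = 3 then 4*(l+4-k)*k*(k-1)*(k-2)
     else if i = 4 then k*(k-1)*(k-2)*(k-3) else 0)
  else if m = 1 then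
    (if i = 0 then (l+2-k)*(l+1-k)*(l-k)
     else if i = 1 then -((l+2-k)*(l+1-k)*(l-4*k))
     else if i = 2 then -(3*(l+2-k)*(l-2*k+2)*k)
     else if i = 3 then -((3*l-4*k+8)*k*(k-1))
     else if i = 4 then -(k*(k-1)*(k-2)) else 0)
  else if m = 0 then
    (if i = 0 then (l-k)*(l-1-k)
     else if i = 1 then -(2*(l-k)*(l-2*k-1))
     else if i = 2 then l^2-6*k*l+6*k^2-l
     else if i = 3 then 2*(l-2*k+1)*k
     else if i = 4 then k*(k-1) else 0)
  else if m = -1 then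
    (if i = 0 then l-k-2
     else if i = 1 then -(3*l-4*k-6)
     else if i = 2 then 3*(l-2*k-2)
     else if i = 3 then -(l-4*k-2)
     else if i = 4 then -k else 0)
  else if m = -2 then
    (if i = 0 then 1 else if i = 1 then -4 else if i = 2 then 6
     else if i = 3 then -4 else if i = 4 then 1 else 0)
  else 0

/-- Denominators `d(l,2m)`. -/
def d (l m : ℤ) : ℤ :=
  if m = 2 then (l+4)*(l+3)*(l+2)*(l+1)
  else if m = 1 then (l+2)*(l+1)*l
  else if m = 0 then l*(l-1)
  else if m = -1 then l-2
  else if m = -2 then 1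
  else 1

/-- The Clebsch–Gordan coefficients `A_{[l,2m;k,i]} = a(l,2m;k,i)/d(l,2m)`. -/
def A (l m k i : ℤ) : ℂ := ((a l m k i : ℤ) : ℂ) / ((d l m : ℤ) : ℂ)


private lemma keyA (x y D : ℤ) (c : ℂ) (h : (x : ℂ) = c * (y : ℂ)) :
    ((x : ℤ) : ℂ) / ((D : ℤ) : ℂ) = c * (((y : ℤ) : ℂ) / ((D : ℤ) : ℂ)) := by
  rw [h, mul_div_assoc]

private lemma keyC (x y z D : ℤ) (c1 c2 c3 : ℂ)
    (h : 3 * (c1 * (x : ℂ) + c2 * (y : ℂ)) = c3 * (z : ℂ)) :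
    3 * (c1 * (((x : ℤ) : ℂ) / ((D : ℤ) : ℂ)) + c2 * (((y : ℤ) : ℂ) / ((D : ℤ) : ℂ)))
      = c3 * (((z : ℤ) : ℂ) / ((D : ℤ) : ℂ)) := by
  rw [show (3:ℂ) * (c1 * ((x:ℂ)/(D:ℂ)) + c2 * ((y:ℂ)/(D:ℂ)))
      = (3 * (c1 * (x:ℂ) + c2 * (y:ℂ))) / (D:ℂ) by ring, h, mul_div_assoc]

set_option maxHeartbeats 1000000 in
/-- The symmetry and three-term relations of Lemma 3.3 for the Clebsch–Gordan
coefficients `A_{[l,2m;k,i]}`, for all `-2 ≤ m ≤ 2` and `0 ≤ k ≤ l+2m`. -/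
theorem stmt_11 (l m k : ℤ) (hl : 0 ≤ l) (hm1 : -2 ≤ m) (hm2 : m ≤ 2)
    (hk1 : 0 ≤ k) (hk2 : k ≤ l + 2 * m) :
    A l m (l + 2 * m - k) 0 = (-1 : ℂ) ^ m * A l m k 4 ∧
    A l m (l + 2 * m - k) 2 = (-1 : ℂ) ^ m * A l m k 2 ∧
    3 * (((k - m + 1 : ℤ) : ℂ) * A l m k 1 + ((l - k + m + 1 : ℤ) : ℂ) * A l m k 3)
      = ((m * l + m ^ 2 + m - 6 : ℤ) : ℂ) * A l m k 2 := by
  interval_cases m <;>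
    refine ⟨?_, ?_, ?_⟩ <;>
    simp only [A] <;>
    (first
      | refine keyA _ _ _ _ ?_
      | refine keyC _ _ _ _ _ _ _ ?_) <;>
    simp only [a] <;>
    norm_num <;>
    push_cast <;>
    ring

end Stmt11
end
end

section
/- Let M_0 = {diag(ε_1,ε_2,ε_1ε_2) : ε_i = ±1} ⊂ SO(3), let σ_0 be the character of M_0 determined by (σ_{0,1},σ_{0,2}) ∈ {0,1}², and let V_{2l} be the irreducible SO(3)-representation of dimension 2l+1. Then the dimension of the σ_0-isotypic subspace V_{2l}[σ_0] = {v : τ_{2l}(m)v = σ_0(m)v for all m ∈ M_0} equals: (l+2)/2 if (σ_{0,1},σ_{0,2}) = (0,0) and l even; (l-1)/2 if (σ_{0,1},σ_{0,2}) = (0,0) and l odd; l/2 if (σ_{0,1},σ_{0,2}) ≠ (0,0) and l even; (l+1)/2 if (σ_{0,1},σ_{0,2}) ≠ (0,0) and l odd. -/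
noncomputable section
open Complex

namespace Stmt14

/-- The action of `m₀,₁ = diag(-1,1,-1)` on `V_{2l}` (coordinates with respect to the
standard basis), coming from `τ_{2l}(m₀,₁)v_k = (-1)^k v_{2l-k}`. -/
def T1 (l : ℕ) : (Fin (2 * l + 1) → ℂ) →ₗ[ℂ] (Fin (2 * l + 1) → ℂ) where
  toFun f := fun j => (-1 : ℂ) ^ (j : ℕ) * f (Fin.rev j)
  map_add' f g := by funext j; simp [mul_add]
  map_smul' c f := by funext j; simp; ring

/-- The action of `m₀,₂ = diag(1,-1,-1)` on `V_{2l}`, coming from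
`τ_{2l}(m₀,₂)v_k = (-1)^{l-k} v_k`. -/
def T2 (l : ℕ) : (Fin (2 * l + 1) → ℂ) →ₗ[ℂ] (Fin (2 * l + 1) → ℂ) where
  toFun f := fun j => (-1 : ℂ) ^ (l + (j : ℕ)) * f j
  map_add' f g := by funext j; simp [mul_add]
  map_smul' c f := by funext j; simp; ring

/-- The `σ₀`-isotypic subspace `V_{2l}[σ₀]` for the character of `M₀` determined by
`(σ₁, σ₂) ∈ {0,1}²`. -/
def isotypic (l σ1 σ2 : ℕ) : Submodule ℂ (Fin (2 * l + 1) → ℂ) :=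
  LinearMap.ker (T1 l - ((-1 : ℂ) ^ σ1) • LinearMap.id) ⊓
    LinearMap.ker (T2 l - ((-1 : ℂ) ^ σ2) • LinearMap.id)

lemma T1_apply (l : ℕ) (f : Fin (2*l+1) → ℂ) (j : Fin (2*l+1)) :
    T1 l f j = (-1 : ℂ) ^ (j : ℕ) * f (Fin.rev j) := rfl

lemma T2_apply (l : ℕ) (f : Fin (2*l+1) → ℂ) (j : Fin (2*l+1)) :
    T2 l f j = (-1 : ℂ) ^ (l + (j : ℕ)) * f j := rfl

lemma rev_val (l : ℕ) (j : Fin (2*l+1)) : (Fin.rev j : ℕ) = 2*l - j := by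
  rw [Fin.val_rev]; omega

lemma pow_rev (l : ℕ) (j : Fin (2*l+1)) :
    (-1 : ℂ) ^ ((Fin.rev j : Fin (2*l+1)) : ℕ) = (-1 : ℂ) ^ (j : ℕ) := by
  have hj : (j : ℕ) < 2*l+1 := j.isLt
  have h : ((Fin.rev j : Fin (2*l+1)) : ℕ) + (j : ℕ) = 2*l := by
    rw [rev_val]; omega
  have : (-1 : ℂ) ^ ((Fin.rev j : Fin (2*l+1)) : ℕ) * (-1) ^ (j : ℕ) = 1 := by
    rw [← pow_add, h, pow_mul]; norm_num
  have hsq : ((-1:ℂ) ^ (j:ℕ)) * ((-1:ℂ) ^ (j:ℕ)) = 1 := by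
    rw [← pow_add, ← two_mul, pow_mul]; norm_num
  calc (-1 : ℂ) ^ ((Fin.rev j : Fin (2*l+1)) : ℕ)
      = (-1 :ℂ) ^ ((Fin.rev j : Fin (2*l+1)) : ℕ) * ((-1) ^ (j : ℕ) * (-1) ^ (j:ℕ)) := by
        rw [hsq, mul_one]
    _ = (-1 : ℂ) ^ (j : ℕ) := by rw [← mul_assoc, this, one_mul]

/-- The projector onto the isotypic subspace. -/
def proj (l : ℕ) (ε1 ε2 : ℂ) : (Fin (2*l+1) → ℂ) →ₗ[ℂ] (Fin (2*l+1) → ℂ) :=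
  (4 : ℂ)⁻¹ • (LinearMap.id + ε1 • T1 l + ε2 • T2 l + (ε1 * ε2) • (T1 l ∘ₗ T2 l))

lemma proj_apply (l : ℕ) (ε1 ε2 : ℂ) (f : Fin (2*l+1) → ℂ) (j : Fin (2*l+1)) :
    proj l ε1 ε2 f j = (4:ℂ)⁻¹ * (f j + ε1 * ((-1:ℂ)^(j:ℕ) * f (Fin.rev j))
      + ε2 * ((-1:ℂ)^(l+(j:ℕ)) * f j)
      + (ε1*ε2) * ((-1:ℂ)^(j:ℕ) * ((-1:ℂ)^(l+((Fin.rev j : Fin (2*l+1)):ℕ)) * f (Fin.rev j)))) := by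
  simp [proj, T1_apply, T2_apply, LinearMap.comp_apply]
  ring

lemma isProj (l : ℕ) (ε1 ε2 : ℂ) (h1 : ε1 = 1 ∨ ε1 = -1) (h2 : ε2 = 1 ∨ ε2 = -1) :
    LinearMap.IsProj (LinearMap.ker (T1 l - ε1 • LinearMap.id) ⊓
      LinearMap.ker (T2 l - ε2 • LinearMap.id)) (proj l ε1 ε2) := by
  constructor
  · intro f
    have hrr : ∀ j : Fin (2*l+1), Fin.rev (Fin.rev j) = j := fun j => Fin.rev_rev j
    constructor
    · rw [SetLike.mem_coe, LinearMap.mem_ker]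
      funext j
      have hb := pow_rev l j
      simp only [LinearMap.sub_apply, LinearMap.smul_apply, LinearMap.id_apply, Pi.sub_apply,
        Pi.smul_apply, smul_eq_mul, T1_apply, proj_apply, hrr, pow_rev, Pi.zero_apply]
      rw [pow_add, pow_add, hb]
      rcases h1 with rfl | rfl <;> rcases h2 with rfl | rfl <;>
        rcases Nat.even_or_odd (j:ℕ) with hj | hj <;>
        rw [hj.neg_one_pow] <;>
        rcases Nat.even_or_odd l with hl | hl <;>
        rw [hl.neg_one_pow] <;> ring
    · rw [SetLike.mem_coe, LinearMap.mem_ker]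
      funext j
      have hb := pow_rev l j
      simp only [LinearMap.sub_apply, LinearMap.smul_apply, LinearMap.id_apply, Pi.sub_apply,
        Pi.smul_apply, smul_eq_mul, T2_apply, proj_apply, hrr, pow_rev, Pi.zero_apply]
      rw [pow_add, pow_add, hb]
      rcases h1 with rfl | rfl <;> rcases h2 with rfl | rfl <;>
        rcases Nat.even_or_odd (j:ℕ) with hj | hj <;>
        rw [hj.neg_one_pow] <;>
        rcases Nat.even_or_odd l with hl | hl <;>
        rw [hl.neg_one_pow] <;> ring
  · intro f hf
    obtain ⟨hf1, hf2⟩ := Submodule.mem_inf.mp hf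
    rw [LinearMap.mem_ker] at hf1 hf2
    have e1 : T1 l f = ε1 • f := by
      have := sub_eq_zero.mp hf1
      simpa using this
    have e2 : T2 l f = ε2 • f := by
      have := sub_eq_zero.mp hf2
      simpa using this
    have p1 : ∀ j : Fin (2*l+1), (-1:ℂ)^(j:ℕ) * f (Fin.rev j) = ε1 * f j := by
      intro j
      have := congrFun e1 j
      simpa [T1_apply] using this
    have p2 : ∀ j : Fin (2*l+1), (-1:ℂ)^(l+(j:ℕ)) * f j = ε2 * f j := by
      intro j
      have := congrFun e2 j
      simpa [T2_apply] using this
    funext j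
    rw [proj_apply, p2 j, p2 (Fin.rev j),
      mul_left_comm ((-1:ℂ)^(j:ℕ)) ε2 (f (Fin.rev j)), p1 j]
    rcases h1 with rfl | rfl <;> rcases h2 with rfl | rfl <;> ring


lemma lfin_cond (l : ℕ) (i : Fin (2*l+1)) :
    Fin.rev i = i ↔ i = (⟨l, by omega⟩ : Fin (2*l+1)) := by
  rw [Fin.ext_iff, Fin.ext_iff, Fin.val_rev,
    show ((⟨l, by omega⟩ : Fin (2*l+1)) : ℕ) = l from rfl]
  have := i.isLt
  omega

lemma trace_T1 (l : ℕ) : LinearMap.trace ℂ (Fin (2*l+1) → ℂ) (T1 l) = (-1:ℂ)^l := by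
  classical
  rw [LinearMap.trace_eq_matrix_trace ℂ (Pi.basisFun ℂ (Fin (2*l+1))), Matrix.trace]
  have key : ∀ i : Fin (2*l+1),
      (LinearMap.toMatrix (Pi.basisFun ℂ (Fin (2*l+1))) (Pi.basisFun ℂ (Fin (2*l+1))) (T1 l)).diag i
        = if i = (⟨l, by omega⟩ : Fin (2*l+1)) then (-1:ℂ)^l else 0 := by
    intro i
    rw [Matrix.diag_apply, LinearMap.toMatrix_apply]
    simp only [Pi.basisFun_apply, Pi.basisFun_repr, T1_apply, Pi.single_apply]
    by_cases h : i = (⟨l, by omega⟩ : Fin (2*l+1))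
    · rw [if_pos h, if_pos ((lfin_cond l i).mpr h)]
      subst h
      simp
    · rw [if_neg h, if_neg (fun hc => h ((lfin_cond l i).mp hc)), mul_zero]
  simp only [key]
  rw [Finset.sum_ite_eq' Finset.univ]
  simp

lemma trace_T2 (l : ℕ) : LinearMap.trace ℂ (Fin (2*l+1) → ℂ) (T2 l) = (-1:ℂ)^l := by
  classical
  rw [LinearMap.trace_eq_matrix_trace ℂ (Pi.basisFun ℂ (Fin (2*l+1))), Matrix.trace]
  have key : ∀ i : Fin (2*l+1),
      (LinearMap.toMatrix (Pi.basisFun ℂ (Fin (2*l+1))) (Pi.basisFun ℂ (Fin (2*l+1))) (T2 l)).diag i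
        = (-1:ℂ)^l * (-1:ℂ)^(i:ℕ) := by
    intro i
    rw [Matrix.diag_apply, LinearMap.toMatrix_apply]
    simp only [Pi.basisFun_apply, Pi.basisFun_repr, T2_apply, Pi.single_apply, pow_add]
    simp
  simp only [key]
  rw [← Finset.mul_sum]
  have : ∑ i : Fin (2*l+1), (-1:ℂ)^(i:ℕ) = 1 := by
    rw [Fin.sum_univ_eq_sum_range (fun i => (-1:ℂ)^i), neg_one_geom_sum, if_neg]
    simp [Nat.even_add_one, Nat.even_mul]
  rw [this, mul_one]

lemma trace_T12 (l : ℕ) :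
    LinearMap.trace ℂ (Fin (2*l+1) → ℂ) (T1 l ∘ₗ T2 l) = (-1:ℂ)^l := by
  classical
  rw [LinearMap.trace_eq_matrix_trace ℂ (Pi.basisFun ℂ (Fin (2*l+1))), Matrix.trace]
  have key : ∀ i : Fin (2*l+1),
      (LinearMap.toMatrix (Pi.basisFun ℂ (Fin (2*l+1))) (Pi.basisFun ℂ (Fin (2*l+1)))
        (T1 l ∘ₗ T2 l)).diag i
        = if i = (⟨l, by omega⟩ : Fin (2*l+1)) then (-1:ℂ)^l else 0 := by
    intro i
    rw [Matrix.diag_apply, LinearMap.toMatrix_apply]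
    simp only [Pi.basisFun_apply, Pi.basisFun_repr, LinearMap.comp_apply, T1_apply, T2_apply,
      Pi.single_apply]
    by_cases h : i = (⟨l, by omega⟩ : Fin (2*l+1))
    · rw [if_pos h, if_pos ((lfin_cond l i).mpr h)]
      subst h
      have hrev : Fin.rev (⟨l, by omega⟩ : Fin (2*l+1)) = ⟨l, by omega⟩ :=
        (lfin_cond l _).mpr rfl
      rw [hrev, mul_one, show ((⟨l, by omega⟩ : Fin (2*l+1)) : ℕ) = l from rfl, ← pow_add,
        show l + (l + l) = l + 2*l from by ring, pow_add, pow_mul]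
      norm_num
    · rw [if_neg h, if_neg (fun hc => h ((lfin_cond l i).mp hc))]
      ring
  simp only [key]
  rw [Finset.sum_ite_eq' Finset.univ]
  simp

lemma trace_proj (l : ℕ) (ε1 ε2 : ℂ) :
    LinearMap.trace ℂ (Fin (2*l+1) → ℂ) (proj l ε1 ε2)
      = (4:ℂ)⁻¹ * ((2*l+1 : ℕ) + (-1:ℂ)^l * (ε1 + ε2 + ε1*ε2)) := by
  have hfr : (Module.finrank ℂ (Fin (2*l+1) → ℂ) : ℂ) = ((2*l+1 : ℕ) : ℂ) := by
    rw [Module.finrank_fin_fun]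
  rw [proj]
  rw [map_smul, map_add, map_add, map_add, map_smul, map_smul, map_smul,
    LinearMap.trace_id, trace_T1, trace_T2, trace_T12, hfr]
  simp only [smul_eq_mul]
  ring

lemma finrank_eq (l : ℕ) (ε1 ε2 : ℂ) (h1 : ε1 = 1 ∨ ε1 = -1) (h2 : ε2 = 1 ∨ ε2 = -1) :
    ((Module.finrank ℂ (LinearMap.ker (T1 l - ε1 • LinearMap.id) ⊓
      LinearMap.ker (T2 l - ε2 • LinearMap.id) : Submodule ℂ (Fin (2*l+1) → ℂ))) : ℂ)
      = (4:ℂ)⁻¹ * ((2*l+1 : ℕ) + (-1:ℂ)^l * (ε1 + ε2 + ε1*ε2)) := by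
  rw [← (isProj l ε1 ε2 h1 h2).trace, trace_proj]


/-- The dimension of the `σ₀`-isotypic subspace of `V_{2l}`, which by Frobenius reciprocity
is the multiplicity of `τ_{2l}` in the `P₀`-principal series of `SL(3,ℝ)`. -/
theorem stmt_14 (l σ1 σ2 : ℕ) (h1 : σ1 ≤ 1) (h2 : σ2 ≤ 1) :
    Module.finrank ℂ (isotypic l σ1 σ2) =
      if σ1 = 0 ∧ σ2 = 0 then (if Even l then (l + 2) / 2 else (l - 1) / 2)
      else (if Even l then l / 2 else (l + 1) / 2) := by
  have key' : ((Module.finrank ℂ (isotypic l σ1 σ2)) : ℂ)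
      = (4:ℂ)⁻¹ * ((2*l+1 : ℕ) + (-1:ℂ)^l *
          ((-1:ℂ)^σ1 + (-1:ℂ)^σ2 + (-1:ℂ)^σ1 * (-1:ℂ)^σ2)) :=
    finrank_eq l ((-1:ℂ)^σ1) ((-1:ℂ)^σ2)
      (by interval_cases σ1 <;> simp) (by interval_cases σ2 <;> simp)
  interval_cases σ1 <;> interval_cases σ2 <;>
    rcases Nat.even_or_odd l with ⟨m, rfl⟩ | ⟨m, rfl⟩
  · have hneg : (-1:ℂ)^(m+m) = 1 := by rw [← two_mul, pow_mul]; norm_num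
    rw [if_pos ⟨rfl, rfl⟩, if_pos ⟨m, rfl⟩, show (m+m+2)/2 = m+1 from by omega]
    have : ((m+1 : ℕ) : ℂ) = (4:ℂ)⁻¹ * ((2*(m+m)+1 : ℕ) + (-1:ℂ)^(m+m) *
        ((-1:ℂ)^0 + (-1:ℂ)^0 + (-1:ℂ)^0 * (-1:ℂ)^0)) := by
      rw [hneg]; push_cast; ring
    exact Nat.cast_injective (key'.trans this.symm)
  · have hneg : (-1:ℂ)^(2*m+1) = -1 := by rw [pow_succ, pow_mul]; norm_num
    rw [if_pos ⟨rfl, rfl⟩, if_neg (Nat.not_even_iff_odd.mpr ⟨m, rfl⟩),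
      show (2*m+1-1)/2 = m from by omega]
    have : ((m : ℕ) : ℂ) = (4:ℂ)⁻¹ * ((2*(2*m+1)+1 : ℕ) + (-1:ℂ)^(2*m+1) *
        ((-1:ℂ)^0 + (-1:ℂ)^0 + (-1:ℂ)^0 * (-1:ℂ)^0)) := by
      rw [hneg]; push_cast; ring
    exact Nat.cast_injective (key'.trans this.symm)
  · have hneg : (-1:ℂ)^(m+m) = 1 := by rw [← two_mul, pow_mul]; norm_num
    rw [if_neg (by simp), if_pos ⟨m, rfl⟩, show (m+m)/2 = m from by omega]
    have : ((m : ℕ) : ℂ) = (4:ℂ)⁻¹ * ((2*(m+m)+1 : ℕ) + (-1:ℂ)^(m+m) *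
        ((-1:ℂ)^0 + (-1:ℂ)^1 + (-1:ℂ)^0 * (-1:ℂ)^1)) := by
      rw [hneg]; push_cast; ring
    exact Nat.cast_injective (key'.trans this.symm)
  · have hneg : (-1:ℂ)^(2*m+1) = -1 := by rw [pow_succ, pow_mul]; norm_num
    rw [if_neg (by simp), if_neg (Nat.not_even_iff_odd.mpr ⟨m, rfl⟩),
      show (2*m+1+1)/2 = m+1 from by omega]
    have : ((m+1 : ℕ) : ℂ) = (4:ℂ)⁻¹ * ((2*(2*m+1)+1 : ℕ) + (-1:ℂ)^(2*m+1) *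
        ((-1:ℂ)^0 + (-1:ℂ)^1 + (-1:ℂ)^0 * (-1:ℂ)^1)) := by
      rw [hneg]; push_cast; ring
    exact Nat.cast_injective (key'.trans this.symm)
  · have hneg : (-1:ℂ)^(m+m) = 1 := by rw [← two_mul, pow_mul]; norm_num
    rw [if_neg (by simp), if_pos ⟨m, rfl⟩, show (m+m)/2 = m from by omega]
    have : ((m : ℕ) : ℂ) = (4:ℂ)⁻¹ * ((2*(m+m)+1 : ℕ) + (-1:ℂ)^(m+m) *
        ((-1:ℂ)^1 + (-1:ℂ)^0 + (-1:ℂ)^1 * (-1:ℂ)^0)) := by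
      rw [hneg]; push_cast; ring
    exact Nat.cast_injective (key'.trans this.symm)
  · have hneg : (-1:ℂ)^(2*m+1) = -1 := by rw [pow_succ, pow_mul]; norm_num
    rw [if_neg (by simp), if_neg (Nat.not_even_iff_odd.mpr ⟨m, rfl⟩),
      show (2*m+1+1)/2 = m+1 from by omega]
    have : ((m+1 : ℕ) : ℂ) = (4:ℂ)⁻¹ * ((2*(2*m+1)+1 : ℕ) + (-1:ℂ)^(2*m+1) *
        ((-1:ℂ)^1 + (-1:ℂ)^0 + (-1:ℂ)^1 * (-1:ℂ)^0)) := by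
      rw [hneg]; push_cast; ring
    exact Nat.cast_injective (key'.trans this.symm)
  · have hneg : (-1:ℂ)^(m+m) = 1 := by rw [← two_mul, pow_mul]; norm_num
    rw [if_neg (by simp), if_pos ⟨m, rfl⟩, show (m+m)/2 = m from by omega]
    have : ((m : ℕ) : ℂ) = (4:ℂ)⁻¹ * ((2*(m+m)+1 : ℕ) + (-1:ℂ)^(m+m) *
        ((-1:ℂ)^1 + (-1:ℂ)^1 + (-1:ℂ)^1 * (-1:ℂ)^1)) := by
      rw [hneg]; push_cast; ring
    exact Nat.cast_injective (key'.trans this.symm)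
  · have hneg : (-1:ℂ)^(2*m+1) = -1 := by rw [pow_succ, pow_mul]; norm_num
    rw [if_neg (by simp), if_neg (Nat.not_even_iff_odd.mpr ⟨m, rfl⟩),
      show (2*m+1+1)/2 = m+1 from by omega]
    have : ((m+1 : ℕ) : ℂ) = (4:ℂ)⁻¹ * ((2*(2*m+1)+1 : ℕ) + (-1:ℂ)^(2*m+1) *
        ((-1:ℂ)^1 + (-1:ℂ)^1 + (-1:ℂ)^1 * (-1:ℂ)^1)) := by
      rw [hneg]; push_cast; ring
    exact Nat.cast_injective (key'.trans this.symm)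

end Stmt14
end
end

section
/- Define P^l_0: V_l ⊗ V_4 → V_l by P^l_0(v_q ⊗ w_r) = B_{[l,0;q,r]}·v_{q+r-2} where B_{[l,0;q,r]} = b(l,0;q,r)/((l+3)(l+2)) with b(l,0;q,0) = 6q(q-1), b(l,0;q,1) = -3q(l-2q+1), b(l,0;q,2) = l²-6lq+6q²-l, b(l,0;q,3) = 3(l-2q-1)(l-q), b(l,0;q,4) = 6(l-q)(l-q-1) (out-of-range vectors = 0). Then for l ≥ 2, P^l_0 is a surjective sl(2,C)-homomorphism and P^l_0 ∘ I^l_0 = id on V_l, where I^l_0 is the equivariant embedding V_l → V_l ⊗ V_4 with coefficients A_{[l,0;k,i]} given by a(l,0;k,0) = (l-k)(l-1-k), a(l,0;k,1) = -2(l-k)(l-2k-1), a(l,0;k,2) = l²-6kl+6k²-l, a(l,0;k,3) = 2(l-2k+1)k, a(l,0;k,4) = k(k-1), divided by l(l-1). -/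
noncomputable section
open Finset

namespace Stmt17

def dv (k : ℤ) : ℤ → ℂ := fun j => if j = k then 1 else 0
/-- The delta basis tensor `v_q ⊗ w_i` of `V_l ⊗ V_4`, realized inside `ℤ × ℤ → ℂ`. -/
def dt (q i : ℤ) : ℤ × ℤ → ℂ := fun p => if p = (q, i) then 1 else 0

def Hv (n : ℤ) (f : ℤ → ℂ) : ℤ → ℂ := fun j => ((n - 2 * j : ℤ) : ℂ) * f j
def Ev (f : ℤ → ℂ) : ℤ → ℂ := fun j => ((-(j + 1) : ℤ) : ℂ) * f (j + 1)
def Fv (n : ℤ) (f : ℤ → ℂ) : ℤ → ℂ := fun j => ((j - 1 - n : ℤ) : ℂ) * f (j - 1)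

def Ht (l : ℤ) (f : ℤ × ℤ → ℂ) : ℤ × ℤ → ℂ :=
  fun p => ((l + 4 - 2 * p.1 - 2 * p.2 : ℤ) : ℂ) * f p
def Et (f : ℤ × ℤ → ℂ) : ℤ × ℤ → ℂ :=
  fun p => ((-(p.1 + 1) : ℤ) : ℂ) * f (p.1 + 1, p.2) + ((-(p.2 + 1) : ℤ) : ℂ) * f (p.1, p.2 + 1)
def Ft (l : ℤ) (f : ℤ × ℤ → ℂ) : ℤ × ℤ → ℂ :=
  fun p => ((p.1 - 1 - l : ℤ) : ℂ) * f (p.1 - 1, p.2) + ((p.2 - 5 : ℤ) : ℂ) * f (p.1, p.2 - 1)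

/-- The projector coefficients `B_{[l,0;q,r]} = b(l,0;q,r)/((l+3)(l+2))`. -/
def B (l q r : ℤ) : ℂ :=
  (if r = 0 then (6*q*(q-1) : ℤ)
   else if r = 1 then (-(3*q*(l-2*q+1)) : ℤ)
   else if r = 2 then (l^2-6*l*q+6*q^2-l : ℤ)
   else if r = 3 then (3*(l-2*q-1)*(l-q) : ℤ)
   else if r = 4 then (6*(l-q)*(l-q-1) : ℤ) else 0 : ℤ)
    / (((l+3)*(l+2) : ℤ) : ℂ)

/-- The projector `P^l_0 : V_l ⊗ V_4 → V_l`, `P(v_q ⊗ w_r) = B_{[l,0;q,r]}·v_{q+r-2}`. -/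
def Pop (l : ℤ) (f : ℤ × ℤ → ℂ) : ℤ → ℂ :=
  fun j => ∑ r ∈ Finset.Icc (0 : ℤ) 4, B l (j - r + 2) r * f (j - r + 2, r)

/-- The injector coefficients `A_{[l,0;k,i]} = a(l,0;k,i)/(l(l-1))`. -/
def A (l k i : ℤ) : ℂ :=
  (if i = 0 then ((l-k)*(l-1-k) : ℤ)
   else if i = 1 then (-(2*(l-k)*(l-2*k-1)) : ℤ)
   else if i = 2 then (l^2-6*k*l+6*k^2-l : ℤ)
   else if i = 3 then (2*(l-2*k+1)*k : ℤ)
   else if i = 4 then (k*(k-1) : ℤ) else 0 : ℤ)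
    / ((l*(l-1) : ℤ) : ℂ)

/-- The equivariant embedding `I^l_0 : V_l → V_l ⊗ V_4`. -/
def Iop (l : ℤ) (f : ℤ → ℂ) : ℤ × ℤ → ℂ :=
  fun p => if 0 ≤ p.2 ∧ p.2 ≤ 4 then A l (p.1 + p.2 - 2) p.2 * f (p.1 + p.2 - 2) else 0


lemma sum5 (f : ℤ → ℂ) : ∑ r ∈ Finset.Icc (0:ℤ) 4, f r = f 0 + f 1 + f 2 + f 3 + f 4 := by
  have h : Finset.Icc (0:ℤ) 4 = {0,1,2,3,4} := by decide
  rw [h]; simp [Finset.sum_insert]; ring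

lemma dt_apply (q i a b : ℤ) : dt q i (a, b) = if a = q ∧ b = i then 1 else 0 := by
  simp [dt, Prod.ext_iff]

lemma B0 (l q : ℤ) : B l q 0 = ((6*q*(q-1) : ℤ) : ℂ) / (((l+3)*(l+2) : ℤ) : ℂ) := by simp [B]
lemma B1 (l q : ℤ) : B l q 1 = ((-(3*q*(l-2*q+1)) : ℤ) : ℂ) / (((l+3)*(l+2) : ℤ) : ℂ) := by simp [B]
lemma B2 (l q : ℤ) : B l q 2 = ((l^2-6*l*q+6*q^2-l : ℤ) : ℂ) / (((l+3)*(l+2) : ℤ) : ℂ) := by simp [B]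
lemma B3 (l q : ℤ) : B l q 3 = ((3*(l-2*q-1)*(l-q) : ℤ) : ℂ) / (((l+3)*(l+2) : ℤ) : ℂ) := by simp [B]
lemma B4 (l q : ℤ) : B l q 4 = ((6*(l-q)*(l-q-1) : ℤ) : ℂ) / (((l+3)*(l+2) : ℤ) : ℂ) := by simp [B]

lemma A0 (l k : ℤ) : A l k 0 = (((l-k)*(l-1-k) : ℤ) : ℂ) / ((l*(l-1) : ℤ) : ℂ) := by simp [A]
lemma A1 (l k : ℤ) : A l k 1 = ((-(2*(l-k)*(l-2*k-1)) : ℤ) : ℂ) / ((l*(l-1) : ℤ) : ℂ) := by simp [A]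
lemma A2 (l k : ℤ) : A l k 2 = ((l^2-6*k*l+6*k^2-l : ℤ) : ℂ) / ((l*(l-1) : ℤ) : ℂ) := by simp [A]
lemma A3 (l k : ℤ) : A l k 3 = ((2*(l-2*k+1)*k : ℤ) : ℂ) / ((l*(l-1) : ℤ) : ℂ) := by simp [A]
lemma A4 (l k : ℤ) : A l k 4 = ((k*(k-1) : ℤ) : ℂ) / ((l*(l-1) : ℤ) : ℂ) := by simp [A]

lemma hB23 (l : ℤ) (hl : 2 ≤ l) : (((l+3)*(l+2) : ℤ) : ℂ) ≠ 0 := by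
  have h : (0:ℤ) < (l+3)*(l+2) := by nlinarith
  exact_mod_cast Int.cast_ne_zero.mpr (ne_of_gt h)

lemma hAll (l : ℤ) (hl : 2 ≤ l) : ((l*(l-1) : ℤ) : ℂ) ≠ 0 := by
  have h : (0:ℤ) < l*(l-1) := by nlinarith
  exact_mod_cast Int.cast_ne_zero.mpr (ne_of_gt h)

lemma PH (l : ℤ) (f : ℤ × ℤ → ℂ) : Pop l (Ht l f) = Hv l (Pop l f) := by
  funext j
  simp only [Pop, Ht, Hv, Finset.mul_sum]
  refine Finset.sum_congr rfl fun r _ => ?_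
  push_cast
  ring

set_option maxHeartbeats 1000000 in
lemma PE (l : ℤ) (hl : 2 ≤ l) (q i : ℤ) (hi : 0 ≤ i) (hi4 : i ≤ 4) :
    Pop l (Et (dt q i)) = Ev (Pop l (dt q i)) := by
  have h23 := hB23 l hl
  interval_cases i <;> funext j <;>
    simp only [Pop, Et, Ev, sum5, dt_apply, B0, B1, B2, B3, B4] <;>
    norm_num [mul_ite, ite_mul] <;>
    split_ifs <;>
    first
      | omega
      | (push_cast; field_simp; ring)
      | norm_num
      | rfl

set_option maxHeartbeats 1000000 in
lemma PF (l : ℤ) (hl : 2 ≤ l) (q i : ℤ) (hi : 0 ≤ i) (hi4 : i ≤ 4) :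
    Pop l (Ft l (dt q i)) = Fv l (Pop l (dt q i)) := by
  have h23 := hB23 l hl
  interval_cases i <;> funext j <;>
    simp only [Pop, Ft, Fv, sum5, dt_apply, B0, B1, B2, B3, B4] <;>
    norm_num [mul_ite, ite_mul] <;>
    split_ifs <;>
    first
      | omega
      | (push_cast; field_simp; ring)
      | norm_num
      | rfl

set_option maxHeartbeats 1000000 in
lemma PI (l : ℤ) (hl : 2 ≤ l) (k : ℤ) : Pop l (Iop l (dv k)) = dv k := by
  have h0 : (l:ℂ) ≠ 0 := by exact_mod_cast Int.cast_ne_zero.mpr (by omega)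
  have h1 : (l:ℂ) - 1 ≠ 0 := by
    have : ((l - 1 : ℤ) : ℂ) ≠ 0 := Int.cast_ne_zero.mpr (by omega)
    push_cast at this; exact this
  have h2 : (l:ℂ) + 2 ≠ 0 := by
    have : ((l + 2 : ℤ) : ℂ) ≠ 0 := Int.cast_ne_zero.mpr (by omega)
    push_cast at this; exact this
  have h3 : (l:ℂ) + 3 ≠ 0 := by
    have : ((l + 3 : ℤ) : ℂ) ≠ 0 := Int.cast_ne_zero.mpr (by omega)
    push_cast at this; exact this
  funext j
  by_cases hj : j = k
  · subst hj
    simp only [Pop, Iop, dv, sum5]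
    simp only [Pop, Iop, dv, sum5, B0, B1, B2, B3, B4, A0, A1, A2, A3, A4]
    norm_num [mul_ite, ite_mul]
    split_ifs <;> first | omega | (push_cast; field_simp; ring) | norm_num
  · simp only [Pop, Iop, dv, sum5]
    norm_num [hj, mul_ite, ite_mul]
    split_ifs <;> first | omega | norm_num | rfl

/-- `P^l_0` is a surjective sl(2,ℂ)-homomorphism with `P^l_0 ∘ I^l_0 = id` on `V_l`. -/
theorem stmt_17 (l : ℤ) (hl : 2 ≤ l) :
    (∀ q i : ℤ, 0 ≤ q → q ≤ l → 0 ≤ i → i ≤ 4 →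
      Pop l (Ht l (dt q i)) = Hv l (Pop l (dt q i)) ∧
      Pop l (Et (dt q i)) = Ev (Pop l (dt q i)) ∧
      Pop l (Ft l (dt q i)) = Fv l (Pop l (dt q i))) ∧
    (∀ k : ℤ, 0 ≤ k → k ≤ l → Pop l (Iop l (dv k)) = dv k) := by
  exact ⟨fun q i _ _ hi hi4 => ⟨PH l _, PE l hl q i hi hi4, PF l hl q i hi hi4⟩,
    fun k _ _ => PI l hl k⟩


end Stmt17
end
end

section
/- Define P^l_4: V_l ⊗ V_4 → V_{l+4} by P^l_4(v_q ⊗ w_r) = v_{q+r}, and let I^l_4: V_{l+4} → V_l ⊗ V_4 be the equivariant embedding I^l_4(v_k) = Σ_{i=0}^4 A_{[l,4;k,i]}·v_{k-i} ⊗ w_i with A_{[l,4;k,i]} = binom(4,i)·(l+4-k)(l+3-k)···(l+5-k-(4-i))·k(k-1)···(k-i+1)/((l+4)(l+3)(l+2)(l+1)) as in Formula 1. Then P^l_4 is sl(2,C)-equivariant and P^l_4 ∘ I^l_4 = id on V_{l+4}. -/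
/-!
Equivariance of `P` is a telescoping of the actions along the anti-diagonals `q + r = j`; the
only boundary terms, at `r = 5` for `E` and `r = -1` for `F`, vanish on `V_l ⊗ V_4`. The
composite `P ∘ I` multiplies `v_k` by `∑ᵢ A_{[l,4;k,i]}`, which is `1` by the Chu–Vandermonde
identity `∑ᵢ (4 choose i) (l+4-k)^{(4-i)} k^{(i)} = (l+4)^{(4)}` for falling factorials.
-/

noncomputable section
open Finset

namespace Stmt18

def dv (k : ℤ) : ℤ → ℂ := fun j => if j = k then 1 else 0
/-- The delta basis tensor `v_q ⊗ w_i` of `V_l ⊗ V_4`, realized inside `ℤ × ℤ → ℂ`. -/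
def dt (q i : ℤ) : ℤ × ℤ → ℂ := fun p => if p = (q, i) then 1 else 0

def Hv (n : ℤ) (f : ℤ → ℂ) : ℤ → ℂ := fun j => ((n - 2 * j : ℤ) : ℂ) * f j
def Ev (f : ℤ → ℂ) : ℤ → ℂ := fun j => ((-(j + 1) : ℤ) : ℂ) * f (j + 1)
def Fv (n : ℤ) (f : ℤ → ℂ) : ℤ → ℂ := fun j => ((j - 1 - n : ℤ) : ℂ) * f (j - 1)

def Ht (l : ℤ) (f : ℤ × ℤ → ℂ) : ℤ × ℤ → ℂ :=
  fun p => ((l + 4 - 2 * p.1 - 2 * p.2 : ℤ) : ℂ) * f p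
def Et (f : ℤ × ℤ → ℂ) : ℤ × ℤ → ℂ :=
  fun p => ((-(p.1 + 1) : ℤ) : ℂ) * f (p.1 + 1, p.2) + ((-(p.2 + 1) : ℤ) : ℂ) * f (p.1, p.2 + 1)
def Ft (l : ℤ) (f : ℤ × ℤ → ℂ) : ℤ × ℤ → ℂ :=
  fun p => ((p.1 - 1 - l : ℤ) : ℂ) * f (p.1 - 1, p.2) + ((p.2 - 5 : ℤ) : ℂ) * f (p.1, p.2 - 1)

/-- The projector `P^l_4 : V_l ⊗ V_4 → V_{l+4}`, `P(v_q ⊗ w_r) = v_{q+r}`. -/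
def Pop (f : ℤ × ℤ → ℂ) : ℤ → ℂ :=
  fun j => ∑ r ∈ Finset.Icc (0 : ℤ) 4, f (j - r, r)

/-- The Clebsch–Gordan coefficients `A_{[l,4;k,i]}` of Formula 1. -/
def A (l k i : ℤ) : ℂ :=
  (if i = 0 then ((l+4-k)*(l+3-k)*(l+2-k)*(l+1-k) : ℤ)
   else if i = 1 then (4*(l+4-k)*(l+3-k)*(l+2-k)*k : ℤ)
   else if i = 2 then (6*(l+4-k)*(l+3-k)*k*(k-1) : ℤ)
   else if i = 3 then (4*(l+4-k)*k*(k-1)*(k-2) : ℤ)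
   else if i = 4 then (k*(k-1)*(k-2)*(k-3) : ℤ) else 0 : ℤ)
    / (((l+4)*(l+3)*(l+2)*(l+1) : ℤ) : ℂ)

/-- The equivariant embedding `I^l_4 : V_{l+4} → V_l ⊗ V_4`. -/
def Iop (l : ℤ) (f : ℤ → ℂ) : ℤ × ℤ → ℂ :=
  fun p => if 0 ≤ p.2 ∧ p.2 ≤ 4 then A l (p.1 + p.2) p.2 * f (p.1 + p.2) else 0

lemma sum_Icc_zero_four (f : ℤ → ℂ) :
    ∑ r ∈ Icc (0 : ℤ) 4, f r = f 0 + f 1 + f 2 + f 3 + f 4 := by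
  rw [show Icc (0 : ℤ) 4 = {0, 1, 2, 3, 4} from rfl]
  simp only [mem_insert, zero_ne_one, OfNat.zero_ne_ofNat, mem_singleton, or_self, not_false_eq_true,
    sum_insert, OfNat.one_ne_ofNat, OfNat.ofNat_eq_ofNat, Nat.reduceEqDiff, sum_singleton]
  ring

lemma dt_apply_of_ne {q i j : ℤ} (x : ℤ) (h : j ≠ i) : dt q i (x, j) = 0 := by
  simp [dt, h]

lemma pop_ht (l : ℤ) (f : ℤ × ℤ → ℂ) : Pop (Ht l f) = Hv (l + 4) (Pop f) := by
  funext j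
  simp only [Pop, Ht, Hv, sum_Icc_zero_four]
  push_cast
  ring

lemma pop_et (f : ℤ × ℤ → ℂ) (hf : ∀ x, f (x, 5) = 0) : Pop (Et f) = Ev (Pop f) := by
  funext j
  simp only [Pop, Et, Ev, sum_Icc_zero_four]
  push_cast
  ring_nf
  simp only [hf]
  ring

lemma pop_ft (l : ℤ) (f : ℤ × ℤ → ℂ) (hf : ∀ x, f (x, -1) = 0) :
    Pop (Ft l f) = Fv (l + 4) (Pop f) := by
  funext j
  simp only [Pop, Ft, Fv, sum_Icc_zero_four]
  push_cast
  ring_nf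
  simp only [hf]
  ring

lemma sum_A_eq_one {l : ℤ} (hd : (((l + 4) * (l + 3) * (l + 2) * (l + 1) : ℤ) : ℂ) ≠ 0)
    (k : ℤ) : A l k 0 + A l k 1 + A l k 2 + A l k 3 + A l k 4 = 1 := by
  simp only [A, ↓reduceIte, one_ne_zero, OfNat.ofNat_ne_zero, OfNat.ofNat_ne_one,
    OfNat.ofNat_eq_ofNat, Nat.succ_ne_self, Nat.reduceEqDiff]
  rw [← add_div, ← add_div, ← add_div, ← add_div, div_eq_one_iff_eq hd]
  push_cast
  ring

lemma pop_iop {l : ℤ} (hd : (((l + 4) * (l + 3) * (l + 2) * (l + 1) : ℤ) : ℂ) ≠ 0)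
    (f : ℤ → ℂ) : Pop (Iop l f) = f := by
  funext j
  simp only [Pop, Iop, sum_Icc_zero_four, sub_add_cancel, Std.le_refl, Nat.ofNat_nonneg, and_self,
    ↓reduceIte, zero_le_one, Nat.one_le_ofNat, Int.reduceLE]
  rw [← add_mul, ← add_mul, ← add_mul, ← add_mul, sum_A_eq_one hd, one_mul]

/-- `P^l_4` is sl(2,ℂ)-equivariant and `P^l_4 ∘ I^l_4 = id` on `V_{l+4}`. -/
theorem stmt_18 (l : ℤ) (hl : 0 ≤ l) :
    (∀ q i : ℤ, 0 ≤ q → q ≤ l → 0 ≤ i → i ≤ 4 →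
      Pop (Ht l (dt q i)) = Hv (l + 4) (Pop (dt q i)) ∧
      Pop (Et (dt q i)) = Ev (Pop (dt q i)) ∧
      Pop (Ft l (dt q i)) = Fv (l + 4) (Pop (dt q i))) ∧
    (∀ k : ℤ, 0 ≤ k → k ≤ l + 4 → Pop (Iop l (dv k)) = dv k) := by
  refine ⟨fun q i _ _ hi₀ hi₄ => ⟨pop_ht l _, pop_et _ fun x => dt_apply_of_ne x (by omega),
    pop_ft l _ fun x => dt_apply_of_ne x (by omega)⟩, fun k _ _ => pop_iop ?_ _⟩
  exact Int.cast_ne_zero.mpr (by positivity)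

end Stmt18
end
end
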